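/- With the greedy-policy value-gradient setup: let Ṽ : ℝⁿ × ℝᵖ → ℝ be C², G̃(x, w) = ∇_x Ṽ(x, w), Q(x, a, w) = r(x, a) + γ Ṽ(f(x, a), w), and let π : ℝⁿ × ℝᵖ → ℝᵐ be C¹ and satisfy ∇_a Q(x, π(x, w), w) = 0 for all (x, w) in a neighborhood of each trajectory point (x_t, w₀). Fix x₀ and w₀; let x_{t+1} = f(x_t, π(x_t, w₀)), a_t = π(x_t, w₀), and let J(w) be the total reward Σ_{t=0}^{F−1} γᵗ r(x_t(w), a_t(w)) of the trajectory generated from x₀ by π(·, w). Define V_F(x, w) = 0, V_t(x, w) = r(x, π(x, w)) + γ V_{t+1}(f(x, π(x, w)), w), and set G'_t = ∇_x V_t(x_t, w₀) and G̃_t = G̃(x_t, w₀). Assume each Hessian H_t = ∂²Q/∂a∂a at (x_t, a_t, w₀) is invertible. Then ∇_w J(w₀) = Σ_{t=0}^{F−1} γ^{t+2} M_{t+1} Ω_t (G'_{t+1} − G̃_{t+1}), where M_{t+1} is the p × n matrix with entries ∂G̃^j/∂w^i evaluated at (x_{t+1}, w₀) and Ω_t = −(D_a f(x_t, a_t)) H_t⁻¹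 (D_a f(x_t, a_t))ᵀ. -/

import Mathlib

/-!
The return is `J w = V₀(x₀, w)`, so `∇_w J` comes from differentiating the Bellman recursion
`V_t(x, w) = r(x, π(x, w)) + γ V_{t+1}(f(x, π(x, w)), w)` in `w` along the trajectory and
unrolling. At a greedy action the first-order condition `∇_a r = -γ (D_a f)ᵀ G̃` cancels the reward
term, leaving `∇_w V_t = γ (D_w π)ᵀ (D_a f)ᵀ (G'_{t+1} - G̃_{t+1}) + γ ∇_w V_{t+1}`.
Differentiating the same condition along `w ↦ (π(x, w), w)` gives `Hᵀ D_w π = -γ (D_a f)ᵀ Mᵀ`,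
hence `(D_w π)ᵀ (D_a f)ᵀ = γ M Ω`.
-/

open Matrix

/-- Gradient of a scalar function, as a vector of partial derivatives. -/
noncomputable def grad {k : ℕ} (g : (Fin k → ℝ) → ℝ) (x : Fin k → ℝ) : Fin k → ℝ :=
  fun i => fderiv ℝ g x (Pi.single i 1)

/-- Jacobian of `f` in the action variable (rows indexed by output components). -/
noncomputable def jacA {n m : ℕ} (f : (Fin n → ℝ) × (Fin m → ℝ) → Fin n → ℝ)
    (x : Fin n → ℝ) (a : Fin m → ℝ) : Matrix (Fin n) (Fin m) ℝ :=
  Matrix.of fun j i => fderiv ℝ (fun b => f (x, b) j) a (Pi.single i 1)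

/-- The trajectory generated from `x₀` by the policy `π(·, w)`. -/
def trajW {n m p : ℕ} (f : (Fin n → ℝ) × (Fin m → ℝ) → Fin n → ℝ)
    (π : (Fin n → ℝ) × (Fin p → ℝ) → Fin m → ℝ)
    (x₀ : Fin n → ℝ) (w : Fin p → ℝ) : ℕ → Fin n → ℝ
  | 0 => x₀
  | t + 1 => f (trajW f π x₀ w t, π (trajW f π x₀ w t, w))

open Topology

section Graph

variable {E F G : Type*} [NormedAddCommGroup E] [NormedSpace ℝ E] [NormedAddCommGroup F]
  [NormedSpace ℝ F] [NormedAddCommGroup G] [NormedSpace ℝ G]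
  {g : E × F → G} {L : E × F →L[ℝ] G} {e : E} {w : F}

theorem HasFDerivAt.partial_fst (h : HasFDerivAt g L (e, w)) :
    HasFDerivAt (fun y => g (y, w)) (L.comp (.inl ℝ E F)) e :=
  h.comp e (hasFDerivAt_prodMk_left e w)

theorem HasFDerivAt.partial_snd (h : HasFDerivAt g L (e, w)) :
    HasFDerivAt (fun v => g (e, v)) (L.comp (.inr ℝ E F)) w :=
  h.comp w (hasFDerivAt_prodMk_right e w)

theorem HasFDerivAt.comp_graph {φ : F → E} {Φ : F →L[ℝ] E} (hg : HasFDerivAt g L (φ w, w))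
    (hφ : HasFDerivAt φ Φ w) :
    HasFDerivAt (fun v => g (φ v, v)) ((L.comp (.inl ℝ E F)).comp Φ + L.comp (.inr ℝ E F)) w := by
  refine (hg.comp (f := fun v => (φ v, v)) w (hφ.prodMk (hasFDerivAt_id w))).congr_fderiv ?_
  ext v
  simp [← map_add]

end Graph

noncomputable def jac {k l : ℕ} (φ : (Fin k → ℝ) → Fin l → ℝ) (y : Fin k → ℝ) :
    Matrix (Fin l) (Fin k) ℝ :=
  Matrix.of fun j i => fderiv ℝ (fun z => φ z j) y (Pi.single i 1)

theorem jacA_eq_jac {n m : ℕ} (f : (Fin n → ℝ) × (Fin m → ℝ) → Fin n → ℝ) (x : Fin n → ℝ)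
    (a : Fin m → ℝ) : jacA f x a = jac (fun b => f (x, b)) a :=
  rfl

noncomputable def dualVec (k : ℕ) : ((Fin k → ℝ) →L[ℝ] ℝ) →ₗ[ℝ] Fin k → ℝ :=
  LinearMap.pi fun i => (ContinuousLinearMap.apply ℝ ℝ (Pi.single i 1)).toLinearMap

@[simp]
theorem dualVec_apply {k : ℕ} (L : (Fin k → ℝ) →L[ℝ] ℝ) (i : Fin k) :
    dualVec k L i = L (Pi.single i 1) :=
  rfl

theorem dualVec_comp {k l : ℕ} (L : (Fin l → ℝ) →L[ℝ] ℝ) (K : (Fin k → ℝ) →L[ℝ] Fin l → ℝ) :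
    dualVec k (L.comp K) =
      (LinearMap.toMatrix' (K : (Fin k → ℝ) →ₗ[ℝ] Fin l → ℝ))ᵀ *ᵥ dualVec l L := by
  ext i
  simp only [dualVec_apply, ContinuousLinearMap.comp_apply, Matrix.mulVec, dotProduct,
    Matrix.transpose_apply, LinearMap.toMatrix'_apply, ContinuousLinearMap.coe_coe]
  conv_lhs => rw [← Finset.univ_sum_single (K (Pi.single i 1)), map_sum]
  refine Finset.sum_congr rfl fun j _ => ?_
  rw [← smul_eq_mul, ← map_smul, ← Pi.single_smul, smul_eq_mul, mul_one]

section Coordinates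

variable {k l m n p : ℕ}

theorem HasFDerivAt.grad_eq {g : (Fin k → ℝ) → ℝ} {L : (Fin k → ℝ) →L[ℝ] ℝ} {y : Fin k → ℝ}
    (h : HasFDerivAt g L y) : grad g y = dualVec k L := by
  ext i
  simp [grad, h.fderiv]

theorem HasFDerivAt.jac_eq {φ : (Fin k → ℝ) → Fin l → ℝ} {L : (Fin k → ℝ) →L[ℝ] Fin l → ℝ}
    {y : Fin k → ℝ} (h : HasFDerivAt φ L y) :
    jac φ y = LinearMap.toMatrix' (L : (Fin k → ℝ) →ₗ[ℝ] Fin l → ℝ) := by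
  ext j i
  simp [jac, LinearMap.toMatrix'_apply, (hasFDerivAt_pi'.1 h j).fderiv]

theorem grad_add_const_mul_comp {ρ : (Fin m → ℝ) → ℝ} {φ : (Fin m → ℝ) → Fin n → ℝ}
    {u : (Fin n → ℝ) → ℝ} {b : Fin m → ℝ} (γ : ℝ) (hρ : DifferentiableAt ℝ ρ b)
    (hφ : DifferentiableAt ℝ φ b) (hu : DifferentiableAt ℝ u (φ b)) :
    grad (fun b => ρ b + γ * u (φ b)) b = grad ρ b + γ • (jac φ b)ᵀ *ᵥ grad u (φ b) := by
  have h : HasFDerivAt (fun b => ρ b + γ * u (φ b))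
      (fderiv ℝ ρ b + γ • (fderiv ℝ u (φ b)).comp (fderiv ℝ φ b)) b :=
    hρ.hasFDerivAt.add ((hu.hasFDerivAt.comp b hφ.hasFDerivAt).const_mul γ)
  rw [h.grad_eq, map_add, map_smul, dualVec_comp, ← hρ.hasFDerivAt.grad_eq,
    ← hu.hasFDerivAt.grad_eq, ← hφ.hasFDerivAt.jac_eq]

theorem jac_const_add_mulVec {G : (Fin p → ℝ) → Fin n → ℝ} {w : Fin p → ℝ} (c : Fin k → ℝ)
    (B : Matrix (Fin k) (Fin n) ℝ) (hG : DifferentiableAt ℝ G w) :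
    jac (fun v => c + B *ᵥ G v) w = B * jac G w := by
  have h : HasFDerivAt (fun v => c + B *ᵥ G v)
      ((LinearMap.toContinuousLinearMap (Matrix.toLin' B)).comp (fderiv ℝ G w)) w :=
    ((LinearMap.toContinuousLinearMap (Matrix.toLin' B)).hasFDerivAt.comp w
      hG.hasFDerivAt).const_add c
  rw [h.jac_eq, hG.hasFDerivAt.jac_eq, ContinuousLinearMap.toLinearMap_comp,
    LinearMap.toMatrix'_comp, LinearMap.coe_toContinuousLinearMap, LinearMap.toMatrix'_toLin']

theorem ContDiff.grad_fst {F : Type*} [NormedAddCommGroup F] [NormedSpace ℝ F] {N : WithTop ℕ∞}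
    {g : (Fin m → ℝ) × F → ℝ} (hg : ContDiff ℝ (N + 1) g) :
    ContDiff ℝ N fun q : (Fin m → ℝ) × F => grad (fun b => g (b, q.2)) q.1 := by
  have h : (fun q : (Fin m → ℝ) × F => grad (fun b => g (b, q.2)) q.1) =
      fun q j => fderiv ℝ g q (Pi.single j 1, 0) := by
    funext q j
    rw [((hg.differentiable (by simp)) q).hasFDerivAt.partial_fst.grad_eq]
    rfl
  rw [h]
  exact contDiff_pi.2 fun j => (hg.fderiv_right le_rfl).clm_apply contDiff_const

theorem jac_fst_mul_jac_eq_neg_jac_snd {Ψ : (Fin m → ℝ) × (Fin p → ℝ) → Fin k → ℝ}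
    {ψ : (Fin p → ℝ) → Fin m → ℝ} {w : Fin p → ℝ} (hΨ : DifferentiableAt ℝ Ψ (ψ w, w))
    (hψ : DifferentiableAt ℝ ψ w) (h : ∀ᶠ v in 𝓝 w, Ψ (ψ v, v) = 0) :
    jac (fun b => Ψ (b, w)) (ψ w) * jac ψ w = -jac (fun v => Ψ (ψ w, v)) w := by
  have hΨ' := hΨ.hasFDerivAt
  have h0 := (hΨ'.comp_graph hψ.hasFDerivAt).unique
    ((hasFDerivAt_const 0 w).congr_of_eventuallyEq h)
  rw [hΨ'.partial_fst.jac_eq, hψ.hasFDerivAt.jac_eq, hΨ'.partial_snd.jac_eq,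
    ← LinearMap.toMatrix'_comp, ← ContinuousLinearMap.toLinearMap_comp, eq_neg_iff_add_eq_zero,
    ← map_add, ← ContinuousLinearMap.toLinearMap_add, h0]
  simp

theorem grad_bellman_eq_of_foc {ρ : (Fin m → ℝ) → ℝ} {φ : (Fin m → ℝ) → Fin n → ℝ}
    {ψ : (Fin p → ℝ) → Fin m → ℝ} {u : (Fin n → ℝ) → ℝ} {V : (Fin n → ℝ) × (Fin p → ℝ) → ℝ}
    {γ : ℝ} {w : Fin p → ℝ} (hρ : DifferentiableAt ℝ ρ (ψ w))
    (hφ : DifferentiableAt ℝ φ (ψ w)) (hψ : DifferentiableAt ℝ ψ w)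
    (hu : DifferentiableAt ℝ u (φ (ψ w))) (hV : DifferentiableAt ℝ V (φ (ψ w), w))
    (hfoc : grad (fun b => ρ b + γ * u (φ b)) (ψ w) = 0) :
    grad (fun v => ρ (ψ v) + γ * V (φ (ψ v), v)) w =
      γ • ((jac φ (ψ w) * jac ψ w)ᵀ *ᵥ (grad (fun y => V (y, w)) (φ (ψ w)) - grad u (φ (ψ w))) +
        grad (fun v => V (φ (ψ w), v)) w) := by
  rw [grad_add_const_mul_comp γ hρ hφ hu, add_eq_zero_iff_eq_neg] at hfoc
  have hV' := hV.hasFDerivAt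
  have h : HasFDerivAt (fun v => ρ (ψ v) + γ * V (φ (ψ v), v))
      ((fderiv ℝ ρ (ψ w)).comp (fderiv ℝ ψ w) + γ • (((fderiv ℝ V (φ (ψ w), w)).comp
        (.inl ℝ _ _)).comp ((fderiv ℝ φ (ψ w)).comp (fderiv ℝ ψ w)) +
          (fderiv ℝ V (φ (ψ w), w)).comp (.inr ℝ _ _))) w :=
    (hρ.hasFDerivAt.comp w hψ.hasFDerivAt).add
      ((hV'.comp_graph (hφ.hasFDerivAt.comp w hψ.hasFDerivAt)).const_mul γ)
  rw [h.grad_eq, map_add, map_smul, map_add, dualVec_comp, dualVec_comp,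
    ← hρ.hasFDerivAt.grad_eq, ← hV'.partial_fst.grad_eq, ← hV'.partial_snd.grad_eq,
    ContinuousLinearMap.toLinearMap_comp, LinearMap.toMatrix'_comp, ← hφ.hasFDerivAt.jac_eq,
    ← hψ.hasFDerivAt.jac_eq, hfoc]
  simp only [Matrix.transpose_mul, ← Matrix.mulVec_mulVec, Matrix.mulVec_neg, Matrix.mulVec_smul,
    Matrix.mulVec_sub, smul_add, smul_sub]
  abel

end Coordinates

theorem transpose_mul_eq_of_mul_eq_neg_smul {ι κ μ R : Type*} [Fintype ι] [DecidableEq ι]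
    [Fintype κ] [Fintype μ] [CommRing R] {K : Matrix ι ι R} {A : Matrix κ ι R}
    {P : Matrix ι μ R} {N : Matrix κ μ R} {γ : R} (hK : IsUnit K.det)
    (h : K * P = -(γ • Aᵀ * N)) : (A * P)ᵀ = γ • (Nᵀ * -(A * Kᵀ⁻¹ * Aᵀ)) := by
  rw [← K.nonsing_inv_mul_cancel_left P hK, h]
  simp [Matrix.transpose_mul, Matrix.transpose_nonsing_inv, Matrix.mul_assoc]

theorem backward_recursion_eq_sum {R M : Type*} [Semiring R] [AddCommMonoid M] [Module R M]
    {F : ℕ} {γ : R} {v c : ℕ → M} (hF : v F = 0) (hrec : ∀ t < F, v t = c t + γ • v (t + 1)) :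
    v 0 = ∑ t ∈ Finset.range F, γ ^ t • c t := by
  induction F generalizing v c with
  | zero => exact hF
  | succ F ih =>
    rw [hrec 0 F.succ_pos, ih (v := fun t => v (t + 1)) (c := fun t => c (t + 1)) hF
      fun t ht => hrec (t + 1) (by omega), Finset.sum_range_succ', Finset.smul_sum]
    simp [smul_smul, pow_succ', add_comm]

section Value

variable {X A W : Type*} [NormedAddCommGroup X] [NormedSpace ℝ X] [NormedAddCommGroup A]
  [NormedSpace ℝ A] [NormedAddCommGroup W] [NormedSpace ℝ W] {f : X × A → X} {r : X × A → ℝ}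
  {π : X × W → A} {V : ℕ → X × W → ℝ} {F : ℕ} {γ : ℝ}

theorem contDiff_value {N : WithTop ℕ∞} (hf : ContDiff ℝ N f) (hr : ContDiff ℝ N r)
    (hπ : ContDiff ℝ N π) (hVF : ∀ x w, V F (x, w) = 0)
    (hVrec : ∀ t < F, ∀ x w, V t (x, w) = r (x, π (x, w)) + γ * V (t + 1) (f (x, π (x, w)), w))
    {t : ℕ} (ht : t ≤ F) : ContDiff ℝ N (V t) := by
  refine Nat.decreasingInduction (motive := fun t _ => ContDiff ℝ N (V t))
    (fun t ht ih => ?_) ?_ ht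
  · rw [show V t = fun q => r (q.1, π q) + γ * V (t + 1) (f (q.1, π q), q.2) from
      funext fun q => hVrec t ht q.1 q.2]
    fun_prop
  · rw [show V F = fun _ => 0 from funext fun q => hVF q.1 q.2]
    exact contDiff_const

end Value

section Model

variable {n m p : ℕ} {γ : ℝ} {f : (Fin n → ℝ) × (Fin m → ℝ) → Fin n → ℝ}
  {r : (Fin n → ℝ) × (Fin m → ℝ) → ℝ} {π : (Fin n → ℝ) × (Fin p → ℝ) → Fin m → ℝ}
  {Vtilde : (Fin n → ℝ) × (Fin p → ℝ) → ℝ}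

theorem value_zero_eq_sum {V : ℕ → (Fin n → ℝ) × (Fin p → ℝ) → ℝ} {F : ℕ}
    (hVF : ∀ x w, V F (x, w) = 0)
    (hVrec : ∀ t < F, ∀ x w, V t (x, w) = r (x, π (x, w)) + γ * V (t + 1) (f (x, π (x, w)), w))
    (x₀ : Fin n → ℝ) (w : Fin p → ℝ) :
    V 0 (x₀, w) = ∑ t ∈ Finset.range F,
      γ ^ t * r (trajW f π x₀ w t, π (trajW f π x₀ w t, w)) :=
  backward_recursion_eq_sum (v := fun t => V t (trajW f π x₀ w t, w))
    (c := fun t => r (trajW f π x₀ w t, π (trajW f π x₀ w t, w))) (γ := γ) (hVF _ _)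
    fun t ht => hVrec t ht _ _

theorem jac_grad_q_mul_jac_policy {x : Fin n → ℝ} {w₀ : Fin p → ℝ} (hf : ContDiff ℝ 2 f)
    (hr : ContDiff ℝ 2 r) (hVtilde : ContDiff ℝ 2 Vtilde)
    (hπ : DifferentiableAt ℝ (fun w => π (x, w)) w₀)
    (hfoc : ∀ᶠ w in 𝓝 w₀, grad (fun b => r (x, b) + γ * Vtilde (f (x, b), w)) (π (x, w)) = 0) :
    jac (fun b => grad (fun b' => r (x, b') + γ * Vtilde (f (x, b'), w₀)) b) (π (x, w₀)) *
        jac (fun w => π (x, w)) w₀ =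
      -(γ • (jac (fun b => f (x, b)) (π (x, w₀)))ᵀ *
        jac (fun w => grad (fun y => Vtilde (y, w)) (f (x, π (x, w₀)))) w₀) := by
  have hf' := hf.differentiable two_ne_zero
  have hr' := hr.differentiable two_ne_zero
  have hVtilde' := hVtilde.differentiable two_ne_zero
  have hΨ : ContDiff ℝ 1 fun q : (Fin m → ℝ) × (Fin p → ℝ) =>
      grad (fun b => r (x, b) + γ * Vtilde (f (x, b), q.2)) q.1 :=
    ContDiff.grad_fst (g := fun q => r (x, q.1) + γ * Vtilde (f (x, q.1), q.2)) (by fun_prop)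
  have hG : Differentiable ℝ fun w => grad (fun y => Vtilde (y, w)) (f (x, π (x, w₀))) :=
    ((ContDiff.grad_fst (N := 1) hVtilde).comp
      (contDiff_const.prodMk contDiff_id)).differentiable one_ne_zero
  have hΨsnd : (fun w => grad (fun b => r (x, b) + γ * Vtilde (f (x, b), w)) (π (x, w₀))) =
      fun w => grad (fun b => r (x, b)) (π (x, w₀)) +
        (γ • (jac (fun b => f (x, b)) (π (x, w₀)))ᵀ) *ᵥ
          grad (fun y => Vtilde (y, w)) (f (x, π (x, w₀))) := by
    funext w
    rw [grad_add_const_mul_comp (u := fun y => Vtilde (y, w)) γ (by fun_prop) (by fun_prop)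
      (by fun_prop), Matrix.smul_mulVec]
  have := jac_fst_mul_jac_eq_neg_jac_snd ((hΨ.differentiable one_ne_zero) _) hπ hfoc
  rwa [hΨsnd, jac_const_add_mulVec _ _ (hG _)] at this

theorem grad_bellman_step {V : (Fin n → ℝ) × (Fin p → ℝ) → ℝ}
    {Gtilde : (Fin n → ℝ) → (Fin p → ℝ) → Fin n → ℝ}
    {Q : (Fin n → ℝ) → (Fin m → ℝ) → (Fin p → ℝ) → ℝ}
    (hf : ContDiff ℝ 2 f) (hr : ContDiff ℝ 2 r) (hVtilde : ContDiff ℝ 2 Vtilde)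
    (hπ : Differentiable ℝ π)
    (hGtilde : ∀ x w j, Gtilde x w j = fderiv ℝ (fun x' => Vtilde (x', w)) x (Pi.single j 1))
    (hQ : ∀ x a w, Q x a w = r (x, a) + γ * Vtilde (f (x, a), w))
    {x x' : Fin n → ℝ} {w₀ : Fin p → ℝ} {a : Fin m → ℝ} (ha : a = π (x, w₀))
    (hx' : x' = f (x, a)) (hV : DifferentiableAt ℝ V (x', w₀))
    (hfoc : ∀ᶠ q : (Fin n → ℝ) × (Fin p → ℝ) in 𝓝 (x, w₀),
      ∀ j : Fin m, fderiv ℝ (fun b => Q q.1 b q.2) (π q) (Pi.single j 1) = 0)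
    {H : Matrix (Fin m) (Fin m) ℝ}
    (hH : ∀ j k, H j k =
      fderiv ℝ (fun b => fderiv ℝ (fun b' => Q x b' w₀) b (Pi.single k 1)) a (Pi.single j 1))
    (hHinv : IsUnit H.det) {M : Matrix (Fin p) (Fin n) ℝ}
    (hM : ∀ i j, M i j = fderiv ℝ (fun w => Gtilde x' w j) w₀ (Pi.single i 1))
    {Ω : Matrix (Fin n) (Fin n) ℝ} (hΩ : Ω = -(jacA f x a * H⁻¹ * (jacA f x a)ᵀ)) :
    grad (fun w => r (x, π (x, w)) + γ * V (f (x, π (x, w)), w)) w₀ =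
      γ ^ 2 • (M * Ω) *ᵥ (grad (fun y => V (y, w₀)) x' - Gtilde x' w₀) +
        γ • grad (fun w => V (x', w)) w₀ := by
  subst ha hx' hΩ
  obtain rfl : Q = fun x a w => r (x, a) + γ * Vtilde (f (x, a), w) := funext₃ hQ
  obtain rfl : Gtilde = fun x w => grad (fun y => Vtilde (y, w)) x := funext₃ hGtilde
  obtain rfl : H = (jac (fun b => grad (fun b' => r (x, b') + γ * Vtilde (f (x, b'), w₀)) b)
      (π (x, w₀)))ᵀ := Matrix.ext hH
  obtain rfl : M = (jac (fun w => grad (fun y => Vtilde (y, w)) (f (x, π (x, w₀)))) w₀)ᵀ :=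
    Matrix.ext hM
  have hf' := hf.differentiable two_ne_zero
  have hr' := hr.differentiable two_ne_zero
  have hVtilde' := hVtilde.differentiable two_ne_zero
  have hfoc' : ∀ᶠ w in 𝓝 w₀,
      grad (fun b => r (x, b) + γ * Vtilde (f (x, b), w)) (π (x, w)) = 0 :=
    (((continuous_const.prodMk continuous_id).tendsto w₀).eventually hfoc).mono
      fun w hw => funext hw
  rw [grad_bellman_eq_of_foc (ρ := fun b => r (x, b)) (φ := fun b => f (x, b))
    (ψ := fun w => π (x, w)) (u := fun y => Vtilde (y, w₀)) (by fun_prop) (by fun_prop)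
    (by fun_prop) (by fun_prop) hV hfoc'.self_of_nhds, jacA_eq_jac,
    transpose_mul_eq_of_mul_eq_neg_smul (by rwa [Matrix.det_transpose] at hHinv)
      (jac_grad_q_mul_jac_policy hf hr hVtilde (by fun_prop) hfoc'),
    Matrix.smul_mulVec, smul_add, smul_smul, sq]

end Model

theorem stmt13_general {n m p : ℕ} (F : ℕ) (γ : ℝ)
    (f : (Fin n → ℝ) × (Fin m → ℝ) → Fin n → ℝ)
    (r : (Fin n → ℝ) × (Fin m → ℝ) → ℝ)
    (hf : ContDiff ℝ 2 f) (hr : ContDiff ℝ 2 r)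
    (Vtilde : (Fin n → ℝ) × (Fin p → ℝ) → ℝ) (hVtilde : ContDiff ℝ 2 Vtilde)
    (Gtilde : (Fin n → ℝ) → (Fin p → ℝ) → Fin n → ℝ)
    (hGtilde : ∀ x w j, Gtilde x w j =
      fderiv ℝ (fun x' => Vtilde (x', w)) x (Pi.single j 1))
    (Q : (Fin n → ℝ) → (Fin m → ℝ) → (Fin p → ℝ) → ℝ)
    (hQ : ∀ x a w, Q x a w = r (x, a) + γ * Vtilde (f (x, a), w))
    (π : (Fin n → ℝ) × (Fin p → ℝ) → Fin m → ℝ) (hπ : ContDiff ℝ 1 π)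
    (x₀ : Fin n → ℝ) (w₀ : Fin p → ℝ)
    (x : ℕ → Fin n → ℝ) (hx : ∀ t, x t = trajW f π x₀ w₀ t)
    (a : ℕ → Fin m → ℝ) (ha : ∀ t, a t = π (x t, w₀))
    (hfoc : ∀ t < F, ∀ᶠ q : (Fin n → ℝ) × (Fin p → ℝ) in nhds (x t, w₀),
      ∀ j : Fin m, fderiv ℝ (fun b => Q q.1 b q.2) (π q) (Pi.single j 1) = 0)
    (J : (Fin p → ℝ) → ℝ)
    (hJ : ∀ w, J w = ∑ t ∈ Finset.range F,
      γ ^ t * r (trajW f π x₀ w t, π (trajW f π x₀ w t, w)))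
    (V : ℕ → (Fin n → ℝ) × (Fin p → ℝ) → ℝ)
    (hVF : ∀ x' w, V F (x', w) = 0)
    (hVrec : ∀ t < F, ∀ x' w, V t (x', w) =
      r (x', π (x', w)) + γ * V (t + 1) (f (x', π (x', w)), w))
    (GP : ℕ → Fin n → ℝ)
    (hGP : ∀ t j, GP t j = fderiv ℝ (fun x' => V t (x', w₀)) (x t) (Pi.single j 1))
    (GT : ℕ → Fin n → ℝ) (hGT : ∀ t, GT t = Gtilde (x t) w₀)
    (H : ℕ → Matrix (Fin m) (Fin m) ℝ)
    (hH : ∀ t j k, H t j k =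
      fderiv ℝ (fun b => fderiv ℝ (fun b' => Q (x t) b' w₀) b (Pi.single k 1))
        (a t) (Pi.single j 1))
    (hHinv : ∀ t < F, IsUnit (H t).det)
    (M : ℕ → Matrix (Fin p) (Fin n) ℝ)
    (hM : ∀ t i j, M t i j = fderiv ℝ (fun w => Gtilde (x t) w j) w₀ (Pi.single i 1))
    (Ω : ℕ → Matrix (Fin n) (Fin n) ℝ)
    (hΩ : ∀ t, Ω t = -(jacA f (x t) (a t) * (H t)⁻¹ * (jacA f (x t) (a t))ᵀ)) :
    grad J w₀ = ∑ t ∈ Finset.range F,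
      γ ^ (t + 2) • (M (t + 1)).mulVec ((Ω t).mulVec (GP (t + 1) - GT (t + 1))) := by
  have hstep (t : ℕ) : x (t + 1) = f (x t, a t) := by rw [hx, hx, ha, hx]; rfl
  have hJV : J = fun w => V 0 (x 0, w) := funext fun w => by
    rw [hJ, ← value_zero_eq_sum hVF hVrec, hx]
    rfl
  have hgF : grad (fun w => V F (x F, w)) w₀ = 0 := by
    ext i
    simp [grad, hVF]
  have hg (t : ℕ) (ht : t < F) : grad (fun w => V t (x t, w)) w₀ =
      γ ^ 2 • (M (t + 1) * Ω t) *ᵥ (GP (t + 1) - GT (t + 1)) +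
        γ • grad (fun w => V (t + 1) (x (t + 1), w)) w₀ := by
    have hV : ContDiff ℝ 1 (V (t + 1)) :=
      contDiff_value (hf.of_le one_le_two) (hr.of_le one_le_two) hπ hVF hVrec ht
    rw [funext (hGP (t + 1)), hGT, funext (hVrec t ht (x t))]
    exact grad_bellman_step hf hr hVtilde (hπ.differentiable one_ne_zero) hGtilde hQ (ha t)
      (hstep t) (hV.differentiable one_ne_zero _) (hfoc t ht) (hH t) (hHinv t ht) (hM (t + 1))
      (hΩ t)
  rw [hJV, backward_recursion_eq_sum (v := fun t => grad (fun w => V t (x t, w)) w₀) hgF hg]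
  refine Finset.sum_congr rfl fun t _ => ?_
  rw [smul_smul, ← pow_add, Matrix.mulVec_mulVec]

/-- Section 4 of the paper, Eq. 29: policy-gradient learning
applied to a greedy policy on a value function produces a weight update equal
to the VGL(1) weight update with `Ω_t = −(D_a f) (∂²Q/∂a²)⁻¹ (D_a f)ᵀ`. -/
theorem stmt13 {n m p : ℕ} (F : ℕ) (hF : 1 ≤ F) (γ : ℝ)
    (f : (Fin n → ℝ) × (Fin m → ℝ) → Fin n → ℝ)
    (r : (Fin n → ℝ) × (Fin m → ℝ) → ℝ)
    (hf : ContDiff ℝ 2 f) (hr : ContDiff ℝ 2 r)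
    (Vtilde : (Fin n → ℝ) × (Fin p → ℝ) → ℝ) (hVtilde : ContDiff ℝ 2 Vtilde)
    (Gtilde : (Fin n → ℝ) → (Fin p → ℝ) → Fin n → ℝ)
    (hGtilde : ∀ x w j, Gtilde x w j =
      fderiv ℝ (fun x' => Vtilde (x', w)) x (Pi.single j 1))
    (Q : (Fin n → ℝ) → (Fin m → ℝ) → (Fin p → ℝ) → ℝ)
    (hQ : ∀ x a w, Q x a w = r (x, a) + γ * Vtilde (f (x, a), w))
    (π : (Fin n → ℝ) × (Fin p → ℝ) → Fin m → ℝ) (hπ : ContDiff ℝ 1 π)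
    (x₀ : Fin n → ℝ) (w₀ : Fin p → ℝ)
    (x : ℕ → Fin n → ℝ) (hx : ∀ t, x t = trajW f π x₀ w₀ t)
    (a : ℕ → Fin m → ℝ) (ha : ∀ t, a t = π (x t, w₀))
    (hfoc : ∀ t < F, ∀ᶠ q : (Fin n → ℝ) × (Fin p → ℝ) in nhds (x t, w₀),
      ∀ j : Fin m, fderiv ℝ (fun b => Q q.1 b q.2) (π q) (Pi.single j 1) = 0)
    (J : (Fin p → ℝ) → ℝ)
    (hJ : ∀ w, J w = ∑ t ∈ Finset.range F,
      γ ^ t * r (trajW f π x₀ w t, π (trajW f π x₀ w t, w)))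
    (V : ℕ → (Fin n → ℝ) × (Fin p → ℝ) → ℝ)
    (hVF : ∀ x' w, V F (x', w) = 0)
    (hVrec : ∀ t < F, ∀ x' w, V t (x', w) =
      r (x', π (x', w)) + γ * V (t + 1) (f (x', π (x', w)), w))
    (GP : ℕ → Fin n → ℝ)
    (hGP : ∀ t j, GP t j = fderiv ℝ (fun x' => V t (x', w₀)) (x t) (Pi.single j 1))
    (GT : ℕ → Fin n → ℝ) (hGT : ∀ t, GT t = Gtilde (x t) w₀)
    (H : ℕ → Matrix (Fin m) (Fin m) ℝ)
    (hH : ∀ t j k, H t j k =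
      fderiv ℝ (fun b => fderiv ℝ (fun b' => Q (x t) b' w₀) b (Pi.single k 1))
        (a t) (Pi.single j 1))
    (hHinv : ∀ t < F, IsUnit (H t).det)
    (M : ℕ → Matrix (Fin p) (Fin n) ℝ)
    (hM : ∀ t i j, M t i j = fderiv ℝ (fun w => Gtilde (x t) w j) w₀ (Pi.single i 1))
    (Ω : ℕ → Matrix (Fin n) (Fin n) ℝ)
    (hΩ : ∀ t, Ω t = -(jacA f (x t) (a t) * (H t)⁻¹ * (jacA f (x t) (a t))ᵀ)) :
    grad J w₀ = ∑ t ∈ Finset.range F,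
      γ ^ (t + 2) • (M (t + 1)).mulVec ((Ω t).mulVec (GP (t + 1) - GT (t + 1))) :=
  stmt13_general F γ f r hf hr Vtilde hVtilde Gtilde hGtilde Q hQ π hπ x₀ w₀ x hx a ha hfoc J hJ V
    hVF hVrec GP hGP GT hGT H hH hHinv M hM Ω hΩ
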